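/- arXiv:1408.1337 — 2 statements merged into one kernel-verified Lean document; each statement's English description precedes it below -/
import Mathlib

section
/- Let Ω be a d-dimensional tilable lamination whose translation flow is η-expansive for some η > 0. Then Homeo_L(Ω) is an open subgroup of Homeo(Ω). -/
/-! Common definitions: tilable laminations and their homeomorphism groups. -/

/-- The group structure on self-homeomorphisms, with `(f * g) x = f (g x)`. -/
instance homeoGroup {Ω : Type} [TopologicalSpace Ω] : Group (Ω ≃ₜ Ω) where
  mul f g := g.trans f
  one := Homeomorph.refl Ω
  inv := Homeomorph.symm
  mul_assoc f g h := Homeomorph.ext fun _ => rfl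
  one_mul f := Homeomorph.ext fun _ => rfl
  mul_one f := Homeomorph.ext fun _ => rfl
  inv_mul_cancel f := Homeomorph.ext fun x => f.symm_apply_apply x

/-- The `C⁰`-metric `δ(f,g) = max (sup_x d(f x, g x)) (sup_x d(f⁻¹ x, g⁻¹ x))` on the
homeomorphism group of a compact metric space (uniformly equivalent to the sum version,
hence inducing the `C⁰`-topology). -/
noncomputable instance homeoMetric {Ω : Type} [MetricSpace Ω] [CompactSpace Ω] :
    MetricSpace (Ω ≃ₜ Ω) :=
  MetricSpace.induced
    (fun f => (((⟨⇑f, f.continuous⟩ : C(Ω, Ω)), (⟨⇑f.symm, f.symm.continuous⟩ : C(Ω, Ω)))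
      : C(Ω, Ω) × C(Ω, Ω)))
    (fun f g h => by
      have h1 : (⟨⇑f, f.continuous⟩ : C(Ω, Ω)) = ⟨⇑g, g.continuous⟩ := congrArg Prod.fst h
      exact Homeomorph.ext fun x => DFunLike.congr_fun h1 x)
    inferInstance

/-- The support of a self-homeomorphism. -/
def homeoSupp {Ω : Type} [TopologicalSpace Ω] (f : Ω ≃ₜ Ω) : Set Ω :=
  closure {x | f x ≠ x}

/-- A chart for a box of a flat lamination structure relative to the `ℝ^d`-action `sub`:
a homeomorphism `B ≃ D × C` with `D ⊆ ℝ^d` open and `C` a Cantor set, intertwining the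
action with translations on the first coordinate. -/
structure BoxChart (d : ℕ) (Ω : Type) [TopologicalSpace Ω]
    (sub : Ω → (Fin d → ℝ) → Ω) where
  carrier : Set Ω
  isOpen_carrier : IsOpen carrier
  C : Type
  [topC : TopologicalSpace C]
  nonemptyC : Nonempty C
  compactC : CompactSpace C
  metrizableC : TopologicalSpace.MetrizableSpace C
  totallyDisconnectedC : TotallyDisconnectedSpace C
  perfectC : Perfect (Set.univ : Set C)
  D : Set (Fin d → ℝ)
  isOpen_D : IsOpen D
  chart : carrier ≃ₜ D × C
  equivariant : ∀ (ω : carrier) (t : Fin d → ℝ) (h1 : sub ω.1 t ∈ carrier)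
      (h2 : ((chart ω).1 : Fin d → ℝ) + t ∈ D),
      chart ⟨sub ω.1 t, h1⟩ = (⟨((chart ω).1 : Fin d → ℝ) + t, h2⟩, (chart ω).2)

attribute [instance] BoxChart.topC

/-- `B` admits a box chart. -/
def HasBoxChart {d : ℕ} {Ω : Type} [TopologicalSpace Ω]
    (sub : Ω → (Fin d → ℝ) → Ω) (B : Set Ω) : Prop :=
  ∃ bc : BoxChart d Ω sub, bc.carrier = B

/-- A `d`-dimensional tilable lamination structure on a (nonempty compact metric) space `Ω`:
a continuous free `ℝ^d`-action `(t, ω) ↦ ω − t =: sub ω t` together with a cover by charted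
boxes. -/
structure TilableLamination (d : ℕ) (Ω : Type) [MetricSpace Ω] where
  sub : Ω → (Fin d → ℝ) → Ω
  continuous_sub : Continuous fun p : Ω × (Fin d → ℝ) => sub p.1 p.2
  sub_zero : ∀ ω, sub ω 0 = ω
  sub_add : ∀ ω s t, sub (sub ω s) t = sub ω (s + t)
  free : ∀ ω t, sub ω t = ω → t = 0
  exists_box : ∀ ω : Ω, ∃ B : Set Ω, HasBoxChart sub B ∧ ω ∈ B

namespace TilableLamination

variable {d : ℕ} {Ω : Type} [MetricSpace Ω]

/-- A box of the lamination; as in the paper, all boxes are assumed internal, i.e. their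
closure is contained in another (charted) box. -/
def IsBox (L : TilableLamination d Ω) (B : Set Ω) : Prop :=
  HasBoxChart L.sub B ∧ ∃ B' : Set Ω, HasBoxChart L.sub B' ∧ closure B ⊆ B'

/-- The leaf (= orbit of the translation flow) through `ω`. -/
def leaf (L : TilableLamination d Ω) (ω : Ω) : Set Ω := Set.range (L.sub ω)

/-- Minimality: every leaf is dense. -/
def Minimal (L : TilableLamination d Ω) : Prop := ∀ ω : Ω, Dense (L.leaf ω)

/-- `η`-expansivity of the translation flow. -/
def IsExpansive (L : TilableLamination d Ω) (η : ℝ) : Prop :=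
  ∀ (x y : Ω) (h : (Fin d → ℝ) ≃ₜ (Fin d → ℝ)), h 0 = 0 →
    (∀ t, dist (L.sub x t) (L.sub y (h t)) < η) →
    ∃ t₀ : Fin d → ℝ, ‖t₀‖ < η ∧ L.sub x t₀ = y

/-- `f` has a (continuous) displacement of norm `< ε`. -/
def DisplacementLt (L : TilableLamination d Ω) (f : Ω ≃ₜ Ω) (ε : ℝ) : Prop :=
  ∃ Φ : Ω → (Fin d → ℝ), Continuous Φ ∧ (∀ ω, f ω = L.sub ω (Φ ω)) ∧ ∀ ω, ‖Φ ω‖ < ε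

end TilableLamination

/-- The points of the box of `bc` whose first chart coordinate lies in `D'`
(i.e. `h⁻¹(D' × C)`). -/
def BoxChart.pre {d : ℕ} {Ω : Type} [TopologicalSpace Ω] {sub : Ω → (Fin d → ℝ) → Ω}
    (bc : BoxChart d Ω sub) (D' : Set (Fin d → ℝ)) : Set Ω :=
  {x | ∃ hx : x ∈ bc.carrier, ((bc.chart ⟨x, hx⟩).1 : Fin d → ℝ) ∈ D'}

/-- The vertical `h⁻¹({s} × C)` of the box of `bc`. -/
def BoxChart.vertical {d : ℕ} {Ω : Type} [TopologicalSpace Ω] {sub : Ω → (Fin d → ℝ) → Ω}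
    (bc : BoxChart d Ω sub) (s : Fin d → ℝ) : Set Ω :=
  {y | ∃ hy : y ∈ bc.carrier, ((bc.chart ⟨y, hy⟩).1 : Fin d → ℝ) = s}

/-- An open Euclidean ball in `ℝ^d` (of positive radius). -/
def IsEuclBall {d : ℕ} (D : Set (Fin d → ℝ)) : Prop :=
  ∃ (x : Fin d → ℝ) (r : ℝ), 0 < r ∧
    D = {y : Fin d → ℝ | Real.sqrt (∑ i, (y i - x i) ^ 2) < r}

namespace TilableLamination

variable {d : ℕ} {Ω : Type} [MetricSpace Ω]

/-- A box of ball type: an (internal) box admitting a chart whose horizontal factor is an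
open Euclidean ball. -/
def IsBallBox (L : TilableLamination d Ω) (B : Set Ω) : Prop :=
  L.IsBox B ∧ ∃ bc : BoxChart d Ω L.sub, bc.carrier = B ∧ IsEuclBall bc.D

/-- The set of leaf-preserving homeomorphisms: those mapping each leaf onto itself. -/
def HomeoL (L : TilableLamination d Ω) : Set (Ω ≃ₜ Ω) :=
  {f | ∀ ω : Ω, ⇑f '' L.leaf ω = L.leaf ω}

/-- `f` preserves the vertical structure: for every point `x = h⁻¹(s,c)` of a box with
chart `h : B → D × C` and every box chart `h'` at `f x`, there is a clopen `C̃ ∋ c`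
with `f (h⁻¹({s} × C̃))` contained in the vertical of `f x` in the second box. -/
def VSP (L : TilableLamination d Ω) (f : Ω ≃ₜ Ω) : Prop :=
  ∀ (bc : BoxChart d Ω L.sub) (x : Ω) (hx : x ∈ bc.carrier)
    (bc' : BoxChart d Ω L.sub) (hfx : f x ∈ bc'.carrier),
    ∃ Ct : Set bc.C, IsClopen Ct ∧ (bc.chart ⟨x, hx⟩).2 ∈ Ct ∧
      ∀ (y : Ω) (hy : y ∈ bc.carrier),
        (bc.chart ⟨y, hy⟩).1 = (bc.chart ⟨x, hx⟩).1 → (bc.chart ⟨y, hy⟩).2 ∈ Ct →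
          f y ∈ bc'.vertical ((bc'.chart ⟨f x, hfx⟩).1 : Fin d → ℝ)

/-- The set of vertical-structure-preserving homeomorphisms. -/
def HomeoVsp (L : TilableLamination d Ω) : Set (Ω ≃ₜ Ω) := {f | L.VSP f}

end TilableLamination

/-- The connected component of the identity in a set `S` of homeomorphisms (with the
subspace topology of the `C⁰`-topology), viewed as a subset of the homeomorphism group. -/
def idCompIn {Ω : Type} [MetricSpace Ω] [CompactSpace Ω] (S : Set (Ω ≃ₜ Ω)) :
    Set (Ω ≃ₜ Ω) :=
  {f | ∃ hf : f ∈ S, ∃ h1 : (1 : Ω ≃ₜ Ω) ∈ S,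
    (⟨f, hf⟩ : S) ∈ connectedComponent (⟨1, h1⟩ : S)}

/-- The path component of the identity in a set `S` of homeomorphisms (with the subspace
topology of the `C⁰`-topology), viewed as a subset of the homeomorphism group. -/
def pathCompIn {Ω : Type} [MetricSpace Ω] [CompactSpace Ω] (S : Set (Ω ≃ₜ Ω)) :
    Set (Ω ≃ₜ Ω) :=
  {f | ∃ hf : f ∈ S, ∃ h1 : (1 : Ω ≃ₜ Ω) ∈ S,
    (⟨f, hf⟩ : S) ∈ pathComponent (⟨1, h1⟩ : S)}

/-- `S` is a simple group: a subgroup-like subset which is nontrivial and has no normal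
subgroup other than `{1}` and itself. -/
def IsSimpleGroupSet {G : Type*} [Group G] (S : Set G) : Prop :=
  (1 : G) ∈ S ∧ (∀ a ∈ S, ∀ b ∈ S, a * b ∈ S) ∧ (∀ a ∈ S, a⁻¹ ∈ S) ∧
  (∃ a ∈ S, a ≠ 1) ∧
  ∀ N : Set G, N ⊆ S → (1 : G) ∈ N → (∀ a ∈ N, ∀ b ∈ N, a * b ∈ N) →
    (∀ a ∈ N, a⁻¹ ∈ N) → (∀ g ∈ S, ∀ n ∈ N, g * n * g⁻¹ ∈ N) →
    N = {1} ∨ N = S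

/-- The commutator (derived) subgroup of a subset `S` of a group: the subgroup generated by
commutators of elements of `S`, as a set. -/
def derivedOf {G : Type*} [Group G] (S : Set G) : Set G :=
  (Subgroup.closure {x | ∃ a ∈ S, ∃ b ∈ S, x = a * b * a⁻¹ * b⁻¹} : Subgroup G)

/-- The partition (fragmentation) property for a set of homeomorphisms of a lamination. -/
def PartitionProperty {d : ℕ} {Ω : Type} [MetricSpace Ω]
    (L : TilableLamination d Ω) (S : Set (Ω ≃ₜ Ω)) : Prop :=
  ∀ (k : ℕ) (B : Fin k → Set Ω), (∀ i, L.IsBox (B i)) → (⋃ i, B i) = Set.univ →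
    ∀ f ∈ S, ∃ (ℓ : ℕ) (g : Fin ℓ → (Ω ≃ₜ Ω)) (j : Fin ℓ → Fin k),
      (∀ i, g i ∈ S) ∧ f = (List.ofFn g).prod ∧ ∀ i, homeoSupp (g i) ⊆ B (j i)

/-! In a box the Cantor coordinate is locally constant along any continuous map from a locally
connected space, so such a map stays in one leaf and lifts continuously to the translation
parameters. Applied to `t ↦ k (x - t)` and to its inverse, a homeomorphism `k` yields a
homeomorphism `H` of `ℝ^d` with `H 0 = 0` and `k (x - t) = k x - H t`; if `k` moves every point
by less than `η`, expansivity applied to `x`, `k x` and `H` puts `k x` on the leaf of `x`.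
Finally, any `g` with `δ(g, f) < η` for `f ∈ Homeo_L(Ω)` is `(g f⁻¹) f`, and `g f⁻¹` moves
every point by less than `η`. -/

open Filter Topology

lemma Homeomorph.dist_apply_le_dist {Ω : Type} [MetricSpace Ω] [CompactSpace Ω]
    (f g : Ω ≃ₜ Ω) (x : Ω) : dist (f x) (g x) ≤ dist f g :=
  (ContinuousMap.dist_apply_le_dist (f := ⟨f, f.continuous⟩) (g := ⟨g, g.continuous⟩) x).trans
    (le_max_left _ _)

namespace TilableLamination

variable {d : ℕ} {Ω : Type} [MetricSpace Ω] (L : TilableLamination d Ω)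

lemma sub_injective (ω : Ω) : Function.Injective (L.sub ω) := by
  intro s t hst
  have : L.sub (L.sub ω s) (t - s) = L.sub ω s := by
    rw [L.sub_add, add_sub_cancel, hst]
  exact (sub_eq_zero.mp (L.free _ _ this)).symm

lemma sub_mem_leaf (ω : Ω) (t : Fin d → ℝ) : L.sub ω t ∈ L.leaf ω := ⟨t, rfl⟩

lemma mem_leaf_symm {ω ω' : Ω} (h : ω' ∈ L.leaf ω) : ω ∈ L.leaf ω' := by
  obtain ⟨t, rfl⟩ := h
  exact ⟨-t, by rw [L.sub_add, add_neg_cancel, L.sub_zero]⟩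

lemma mem_leaf_trans {ω ω' ω'' : Ω} (h : ω' ∈ L.leaf ω) (h' : ω'' ∈ L.leaf ω') :
    ω'' ∈ L.leaf ω := by
  obtain ⟨s, rfl⟩ := h
  obtain ⟨t, rfl⟩ := h'
  exact ⟨s + t, (L.sub_add ω s t).symm⟩

lemma eventually_eq_sub_of_chart_eq (bc : BoxChart d Ω L.sub) (ω₀ : bc.carrier) :
    ∀ᶠ v in 𝓝 (0 : Fin d → ℝ), ∀ ω : bc.carrier, (bc.chart ω).2 = (bc.chart ω₀).2 →
      ((bc.chart ω).1 : Fin d → ℝ) = (bc.chart ω₀).1 + v → (ω : Ω) = L.sub ω₀ v := by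
  have hcarrier : ∀ᶠ v in 𝓝 (0 : Fin d → ℝ), L.sub ω₀ v ∈ bc.carrier :=
    (L.continuous_sub.comp (continuous_const.prodMk continuous_id)).tendsto' 0 _
      (L.sub_zero ω₀) (bc.isOpen_carrier.mem_nhds ω₀.2)
  have hD : ∀ᶠ v in 𝓝 (0 : Fin d → ℝ), ((bc.chart ω₀).1 : Fin d → ℝ) + v ∈ bc.D :=
    (continuous_const.add continuous_id).tendsto' 0 _ (add_zero _)
      (bc.isOpen_D.mem_nhds (bc.chart ω₀).1.2)
  filter_upwards [hcarrier, hD] with v hv hvD ω hc hs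
  have hchart : bc.chart ⟨L.sub ω₀ v, hv⟩ = bc.chart ω := by
    rw [bc.equivariant ω₀ v hv hvD]
    exact Prod.ext (Subtype.ext hs.symm) hc.symm
  exact congrArg Subtype.val (bc.chart.injective hchart).symm

lemma exists_eventually_eq_sub {X : Type*} [TopologicalSpace X] [LocallyConnectedSpace X]
    {F : X → Ω} (hF : Continuous F) (x₀ : X) :
    ∃ s : X → (Fin d → ℝ), Tendsto s (𝓝 x₀) (𝓝 0) ∧
      ∀ᶠ x in 𝓝 x₀, F x = L.sub (F x₀) (s x) := by
  classical
  obtain ⟨B, ⟨bc, rfl⟩, hx₀⟩ := L.exists_box (F x₀)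
  have := bc.totallyDisconnectedC
  set V := connectedComponentIn (F ⁻¹' bc.carrier) x₀
  have hV : V ∈ 𝓝 x₀ := ((bc.isOpen_carrier.preimage hF).connectedComponentIn).mem_nhds
    (mem_connectedComponentIn hx₀)
  have hVU : V ⊆ F ⁻¹' bc.carrier := connectedComponentIn_subset _ _
  have hcantor : ∀ x (hx : x ∈ V), (bc.chart ⟨F x, hVU hx⟩).2 = (bc.chart ⟨F x₀, hx₀⟩).2 := by
    have : PreconnectedSpace V := Subtype.preconnectedSpace isPreconnected_connectedComponentIn
    have hcont : Continuous fun x : V => (bc.chart ⟨F x, hVU x.2⟩).2 :=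
      continuous_snd.comp (bc.chart.continuous.comp ((hF.comp continuous_subtype_val).subtype_mk _))
    intro x hx
    exact (isPreconnected_range hcont).subsingleton ⟨⟨x, hx⟩, rfl⟩
      ⟨⟨x₀, mem_connectedComponentIn hx₀⟩, rfl⟩
  set Q : Ω → (Fin d → ℝ) := fun ω => if h : ω ∈ bc.carrier then (bc.chart ⟨ω, h⟩).1 else 0
  have hQ : ContinuousOn Q bc.carrier := by
    rw [continuousOn_iff_continuous_domRestrict]
    have : bc.carrier.domRestrict Q = fun ω => ((bc.chart ω).1 : Fin d → ℝ) :=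
      funext fun ω => dif_pos ω.2
    rw [this]
    exact continuous_subtype_val.comp (continuous_fst.comp bc.chart.continuous)
  have hs : Tendsto (fun x => Q (F x) - Q (F x₀)) (𝓝 x₀) (𝓝 0) := by
    rw [← sub_self (Q (F x₀))]
    exact ((hQ.continuousAt (bc.isOpen_carrier.mem_nhds hx₀)).comp hF.continuousAt).sub
      continuousAt_const
  refine ⟨_, hs, ?_⟩
  filter_upwards [hs.eventually (L.eventually_eq_sub_of_chart_eq bc ⟨F x₀, hx₀⟩), hV]
    with x hx hxV
  refine hx ⟨F x, hVU hxV⟩ (hcantor x hxV) ?_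
  simp only [Q, dif_pos hx₀, dif_pos (show F x ∈ bc.carrier from hVU hxV), add_sub_cancel]

variable {X : Type*} [TopologicalSpace X] [LocallyConnectedSpace X]

lemma mem_leaf_of_preconnectedSpace [PreconnectedSpace X] {F : X → Ω} (hF : Continuous F)
    (x y : X) : F y ∈ L.leaf (F x) := by
  refine PreconnectedSpace.induction₂' (fun x y => F y ∈ L.leaf (F x)) (fun x => ?_)
    ⟨fun _ _ _ => L.mem_leaf_trans⟩ x y
  obtain ⟨s, -, hs⟩ := L.exists_eventually_eq_sub hF x
  filter_upwards [hs] with y hy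
  have hmem : F y ∈ L.leaf (F x) := hy ▸ L.sub_mem_leaf _ _
  exact ⟨hmem, L.mem_leaf_symm hmem⟩

lemma exists_continuous_sub_eq {F : X → Ω} (hF : Continuous F) {y : Ω}
    (hFy : ∀ x, F x ∈ L.leaf y) :
    ∃ g : X → (Fin d → ℝ), Continuous g ∧ ∀ x, F x = L.sub y (g x) := by
  choose g hg using hFy
  refine ⟨g, continuous_iff_continuousAt.2 fun x₀ => ?_, fun x => (hg x).symm⟩
  obtain ⟨s, hs₀, hs⟩ := L.exists_eventually_eq_sub hF x₀
  have hgs : ∀ᶠ x in 𝓝 x₀, g x₀ + s x = g x := by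
    filter_upwards [hs] with x hx
    apply L.sub_injective y
    rw [← L.sub_add, hg x₀, hg x, hx]
  simpa [ContinuousAt] using (tendsto_const_nhds.add hs₀).congr' hgs

lemma exists_continuous_map_sub_eq {k : Ω → Ω} (hk : Continuous k) (x : Ω) :
    ∃ g : (Fin d → ℝ) → (Fin d → ℝ), Continuous g ∧ g 0 = 0 ∧
      ∀ t, k (L.sub x t) = L.sub (k x) (g t) := by
  have hF : Continuous fun t => k (L.sub x t) :=
    hk.comp (L.continuous_sub.comp (continuous_const.prodMk continuous_id))
  have hleaf : ∀ t, k (L.sub x t) ∈ L.leaf (k x) := fun t => by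
    simpa [L.sub_zero] using L.mem_leaf_of_preconnectedSpace hF 0 t
  obtain ⟨g, hg, hgk⟩ := L.exists_continuous_sub_eq hF hleaf
  refine ⟨g, hg, L.sub_injective (k x) ?_, hgk⟩
  rw [← hgk, L.sub_zero, L.sub_zero]

lemma exists_homeomorph_sub_eq (k : Ω ≃ₜ Ω) (x : Ω) :
    ∃ H : (Fin d → ℝ) ≃ₜ (Fin d → ℝ), H 0 = 0 ∧ ∀ t, k (L.sub x t) = L.sub (k x) (H t) := by
  obtain ⟨g, hg, hg₀, hgk⟩ := L.exists_continuous_map_sub_eq k.continuous x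
  obtain ⟨g', hg', -, hgk'⟩ := L.exists_continuous_map_sub_eq k.symm.continuous (k x)
  rw [k.symm_apply_apply] at hgk'
  have hleft : ∀ t, g' (g t) = t := fun t => L.sub_injective x <| by
    rw [← hgk', ← hgk, k.symm_apply_apply]
  have hright : ∀ t, g (g' t) = t := fun t => L.sub_injective (k x) <| by
    rw [← hgk, ← hgk', k.apply_symm_apply]
  exact ⟨⟨⟨g, g', hleft, hright⟩, hg, hg'⟩, hg₀, hgk⟩

lemma mem_leaf_of_dist_lt {η : ℝ} (hexp : L.IsExpansive η) {k : Ω ≃ₜ Ω}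
    (hk : ∀ z, dist (k z) z < η) (x : Ω) : k x ∈ L.leaf x := by
  obtain ⟨H, hH₀, hH⟩ := L.exists_homeomorph_sub_eq k x
  obtain ⟨t₀, -, ht₀⟩ := hexp x (k x) H hH₀ fun t => by
    rw [← hH, dist_comm]
    exact hk _
  exact ⟨t₀, ht₀⟩

lemma mem_homeoL_of_forall_mem_leaf {f : Ω ≃ₜ Ω} (hf : ∀ x, f x ∈ L.leaf x)
    (hf' : ∀ x, f.symm x ∈ L.leaf x) : f ∈ L.HomeoL := fun ω => by
  refine Set.Subset.antisymm ?_ fun z hz => ⟨f.symm z, L.mem_leaf_trans hz (hf' z), by simp⟩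
  rintro _ ⟨z, hz, rfl⟩
  exact L.mem_leaf_trans hz (hf z)

lemma mem_homeoL_of_dist_lt {η : ℝ} (hexp : L.IsExpansive η) {k : Ω ≃ₜ Ω}
    (hk : ∀ z, dist (k z) z < η) : k ∈ L.HomeoL := by
  have hk' : ∀ z, dist (k.symm z) z < η := fun z => by
    simpa [dist_comm] using hk (k.symm z)
  exact L.mem_homeoL_of_forall_mem_leaf (L.mem_leaf_of_dist_lt hexp hk)
    (L.mem_leaf_of_dist_lt hexp hk')

def homeoLSubgroup : Subgroup (Ω ≃ₜ Ω) where
  carrier := L.HomeoL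
  one_mem' _ := Set.image_id _
  mul_mem' {a b} ha hb ω := by
    rw [show ⇑(a * b) = a ∘ b from rfl, Set.image_comp, hb ω, ha ω]
  inv_mem' {a} ha ω := by
    conv_lhs => rw [← ha ω]
    exact a.toEquiv.symm_image_image _

end TilableLamination

variable {d : ℕ} {Ω : Type} [MetricSpace Ω] [CompactSpace Ω] [Nonempty Ω]

open TilableLamination

/-- If the translation flow of a tilable lamination is `η`-expansive for
some `η > 0`, then `Homeo_L(Ω)` is an open subgroup of `Homeo(Ω)`. -/
theorem homeoL_open_of_expansive (L : TilableLamination d Ω) {η : ℝ} (hη : 0 < η)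
    (hexp : L.IsExpansive η) :
    ((1 : Ω ≃ₜ Ω) ∈ HomeoL L ∧
      (∀ a ∈ HomeoL L, ∀ b ∈ HomeoL L, a * b ∈ HomeoL L) ∧
      (∀ a ∈ HomeoL L, a⁻¹ ∈ HomeoL L)) ∧
    IsOpen (HomeoL L) := by
  let G := L.homeoLSubgroup
  refine ⟨⟨G.one_mem, fun _ ha _ hb => G.mul_mem ha hb, fun _ ha => G.inv_mem ha⟩, ?_⟩
  refine Metric.isOpen_iff.2 fun f hf => ⟨η, hη, fun g hg => ?_⟩
  have hclose : ∀ z, dist ((g * f⁻¹) z) z < η := fun z => by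
    simpa using (Homeomorph.dist_apply_le_dist g f (f.symm z)).trans_lt hg
  have hgf : g * f⁻¹ * f ∈ G := G.mul_mem (L.mem_homeoL_of_dist_lt hexp hclose) hf
  rwa [inv_mul_cancel_right] at hgf
end

section
/- Let X be a topological space, let B ⊆ X, and let n, a, b be self-homeomorphisms of X such that n(B) ∩ B = ∅, supp a ⊆ B and supp b ⊆ B. Then, setting h = n⁻¹ ∘ a ∘ n, the commutator satisfies a b a⁻¹ b⁻¹ = n ∘ (h n⁻¹ h⁻¹) ∘ (b h n h⁻¹ b⁻¹) ∘ (b n⁻¹ b⁻¹); in particular, [a,b] is a product of four conjugates of n and n⁻¹ in the group of homeomorphisms of X. -/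
variable {d : ℕ} {Ω : Type} [MetricSpace Ω] [CompactSpace Ω] [Nonempty Ω]

open TilableLamination

lemma homeo_mul_apply {X : Type} [TopologicalSpace X] (f g : X ≃ₜ X) (x : X) :
    (f * g) x = f (g x) := rfl

lemma homeo_inv_apply {X : Type} [TopologicalSpace X] (f : X ≃ₜ X) (x : X) :
    (f⁻¹ : X ≃ₜ X) x = f.symm x := rfl

/-- Tsuboi's algebraic lemma. If `n(B) ∩ B = ∅` and `a, b` are supported
in `B`, then, with `h = n⁻¹ a n`, the commutator `[a, b]` equals
`n (h n⁻¹ h⁻¹) (b h n h⁻¹ b⁻¹) (b n⁻¹ b⁻¹)`, a product of four conjugates of `n, n⁻¹`. -/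
theorem commutator_eq_product_of_conjugates {X : Type} [TopologicalSpace X] (B : Set X)
    (n a b : X ≃ₜ X) (hn : (⇑n '' B) ∩ B = ∅)
    (ha : homeoSupp a ⊆ B) (hb : homeoSupp b ⊆ B) :
    a * b * a⁻¹ * b⁻¹ =
      n * ((n⁻¹ * a * n) * n⁻¹ * (n⁻¹ * a * n)⁻¹) *
        (b * (n⁻¹ * a * n) * n * (n⁻¹ * a * n)⁻¹ * b⁻¹) *
        (b * n⁻¹ * b⁻¹) := by
  -- basic fixed-point facts
  have hafix : ∀ x, x ∉ B → a x = x := by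
    intro x hx
    by_contra hne
    exact hx (ha (subset_closure hne))
  have hbfix : ∀ x, x ∉ B → b x = x := by
    intro x hx
    by_contra hne
    exact hx (hb (subset_closure hne))
  have hnB : ∀ x, x ∈ B → n x ∉ B := by
    intro x hx hnx
    have : n x ∈ (⇑n '' B) ∩ B := ⟨⟨x, hx, rfl⟩, hnx⟩
    rw [hn] at this
    exact this
  have hamem : ∀ x, x ∈ B → a x ∈ B := by
    intro x hx
    by_cases hne : a x = x
    · rwa [hne]
    · exact ha (subset_closure (fun h => hne (a.injective h)))
  have hbmem : ∀ x, x ∈ B → b x ∈ B := by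
    intro x hx
    by_cases hne : b x = x
    · rwa [hne]
    · exact hb (subset_closure (fun h => hne (b.injective h)))
  set h : X ≃ₜ X := n⁻¹ * a * n with hh
  have happly : ∀ x, h x = n.symm (a (n x)) := fun x => rfl
  -- h fixes B pointwise
  have hhfixB : ∀ x, x ∈ B → h x = x := by
    intro x hx
    rw [happly, hafix _ (hnB x hx)]
    exact n.symm_apply_apply x
  -- off B, either h x = x or h x ∉ B
  have hc : h * b = b * h := by
    apply Homeomorph.ext
    intro x
    show h (b x) = b (h x)
    by_cases hx : x ∈ B
    · rw [hhfixB x hx, hhfixB _ (hbmem x hx)]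
    · rw [hbfix x hx]
      by_cases hhx : h x = x
      · rw [hhx, hbfix x hx]
      · have hnx : a (n x) ≠ n x := by
          intro heq
          apply hhx
          rw [happly, heq, n.symm_apply_apply]
        have h1 : n x ∈ B := ha (subset_closure hnx)
        have h2 : a (n x) ∈ B := hamem _ h1
        have h3 : h x ∉ B := by
          intro hmem
          have : n (h x) ∈ (⇑n '' B) ∩ B := by
            refine ⟨⟨h x, hmem, rfl⟩, ?_⟩
            rw [happly, n.apply_symm_apply]
            exact h2
          rw [hn] at this
          exact this
        rw [hbfix _ h3]
  have hc' : Commute h b := hc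
  have hcinv : h⁻¹ * b = b * h⁻¹ := hc'.inv_left.eq
  symm
  calc n * (h * n⁻¹ * h⁻¹) * (b * h * n * h⁻¹ * b⁻¹) * (b * n⁻¹ * b⁻¹)
      = n * h * n⁻¹ * (h⁻¹ * b) * h * n * h⁻¹ * n⁻¹ * b⁻¹ := by group
    _ = n * h * n⁻¹ * (b * h⁻¹) * h * n * h⁻¹ * n⁻¹ * b⁻¹ := by rw [hcinv]
    _ = n * (n⁻¹ * a * n) * n⁻¹ * (b * (n⁻¹ * a * n)⁻¹) * (n⁻¹ * a * n) * n *
          (n⁻¹ * a * n)⁻¹ * n⁻¹ * b⁻¹ := by rw [hh]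
    _ = a * b * a⁻¹ * b⁻¹ := by group
end
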